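/- arXiv:1603.03472 — 2 statements merged into one kernel-verified Lean document; each statement's English description precedes it below -/
import Mathlib

section
/- For every f : X → L: the lower envelope of f over the class of all 𝔥-homogeneous functions X → L and the lower envelope of f over the class of all lower 𝔥-semihomogeneous functions X → L are both lower 𝔥-semihomogeneous; dually, the upper envelope of f over the class of all 𝔥-homogeneous functions and the upper envelope of f over the class of all upper 𝔥-semihomogeneous functions are both upper 𝔥-semihomogeneous. (Corollary 1, semihomogeneous part.) -/
/-- `f : X → L` is `𝔥`-homogeneous: `f (h • x) = 𝔥 h • f x`. -/
def IsHomog {H T X L : Type*} [Monoid H] [Monoid T] [MulAction H X]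
    [SMul T L] (𝔥 : H →* T) (f : X → L) : Prop :=
  ∀ (h : H) (x : X), f (h • x) = 𝔥 h • f x

/-- `f : X → L` is lower `𝔥`-semihomogeneous: `f (h • x) ≤ 𝔥 h • f x`. -/
def IsLowerSemihomog {H T X L : Type*} [Monoid H] [Monoid T] [MulAction H X]
    [SMul T L] [LE L] (𝔥 : H →* T) (f : X → L) : Prop :=
  ∀ (h : H) (x : X), f (h • x) ≤ 𝔥 h • f x

/-- `f : X → L` is upper `𝔥`-semihomogeneous: `𝔥 h • f x ≤ f (h • x)`. -/
def IsUpperSemihomog {H T X L : Type*} [Monoid H] [Monoid T] [MulAction H X]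
    [SMul T L] [LE L] (𝔥 : H →* T) (f : X → L) : Prop :=
  ∀ (h : H) (x : X), 𝔥 h • f x ≤ f (h • x)

/-- The lower `Φ`-envelope `lE_Φ f : x ↦ ⨆ {φ x | φ ∈ Φ, φ ≤ f}`. -/
def lowE {X L : Type*} [CompleteLattice L] (Φ : Set (X → L)) (f : X → L) : X → L :=
  fun x => ⨆ φ ∈ {φ ∈ Φ | φ ≤ f}, φ x

/-- The upper `Φ`-envelope `uE_Φ f : x ↦ ⨅ {φ x | φ ∈ Φ, f ≤ φ}`. -/
def uppE {X L : Type*} [CompleteLattice L] (Φ : Set (X → L)) (f : X → L) : X → L :=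
  fun x => ⨅ φ ∈ {φ ∈ Φ | f ≤ φ}, φ x

/-!
A pointwise supremum of lower `𝔥`-semihomogeneous functions is again lower
`𝔥`-semihomogeneous, because `t • ·` is monotone: each `φ (h • x)` is at most
`𝔥 h • φ x ≤ 𝔥 h • ⨆ ψ, ψ x`. The lower envelope is such a supremum, and
homogeneous functions are in particular lower semihomogeneous. Upper envelopes
are handled dually, with infima.
-/

section Semihomog

variable {H T X L : Type*} [Monoid H] [Monoid T] [MulAction H X] {𝔥 : H →* T}

theorem IsHomog.isLowerSemihomog [SMul T L] [Preorder L] {φ : X → L} (hφ : IsHomog 𝔥 φ) :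
    IsLowerSemihomog 𝔥 φ :=
  fun h x => (hφ h x).le

theorem IsHomog.isUpperSemihomog [SMul T L] [Preorder L] {φ : X → L} (hφ : IsHomog 𝔥 φ) :
    IsUpperSemihomog 𝔥 φ :=
  fun h x => (hφ h x).ge

variable [CompleteLattice L] [SMul T L] (hmono : ∀ t : T, Monotone (t • · : L → L))
include hmono

theorem isLowerSemihomog_biSup {S : Set (X → L)} (hS : ∀ φ ∈ S, IsLowerSemihomog 𝔥 φ) :
    IsLowerSemihomog 𝔥 fun x => ⨆ φ ∈ S, φ x := by
  intro h x
  refine iSup₂_le fun φ hφ => ?_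
  calc φ (h • x) ≤ 𝔥 h • φ x := hS φ hφ h x
    _ ≤ 𝔥 h • ⨆ ψ ∈ S, ψ x := hmono _ (le_iSup₂ (f := fun ψ (_ : ψ ∈ S) => ψ x) φ hφ)

theorem isUpperSemihomog_biInf {S : Set (X → L)} (hS : ∀ φ ∈ S, IsUpperSemihomog 𝔥 φ) :
    IsUpperSemihomog 𝔥 fun x => ⨅ φ ∈ S, φ x := by
  intro h x
  refine le_iInf₂ fun φ hφ => ?_
  calc 𝔥 h • ⨅ ψ ∈ S, ψ x ≤ 𝔥 h • φ x := hmono _ (iInf₂_le (f := fun ψ (_ : ψ ∈ S) => ψ x) φ hφ)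
    _ ≤ φ (h • x) := hS φ hφ h x

theorem isLowerSemihomog_lowE {Φ : Set (X → L)} (hΦ : ∀ φ ∈ Φ, IsLowerSemihomog 𝔥 φ)
    {f : X → L} : IsLowerSemihomog 𝔥 (lowE Φ f) :=
  isLowerSemihomog_biSup hmono fun φ hφ => hΦ φ hφ.1

theorem isUpperSemihomog_uppE {Φ : Set (X → L)} (hΦ : ∀ φ ∈ Φ, IsUpperSemihomog 𝔥 φ)
    {f : X → L} : IsUpperSemihomog 𝔥 (uppE Φ f) :=
  isUpperSemihomog_biInf hmono fun φ hφ => hΦ φ hφ.1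

end Semihomog

/-- **Corollary 1, semihomogeneous part.** Lower envelopes over the classes of
`𝔥`-homogeneous and of lower `𝔥`-semihomogeneous functions are lower
`𝔥`-semihomogeneous; dually, upper envelopes over the classes of
`𝔥`-homogeneous and of upper `𝔥`-semihomogeneous functions are upper
`𝔥`-semihomogeneous. -/
theorem cor1_semihomog {H T X L : Type*} [Monoid H] [Monoid T] [MulAction H X]
    [CompleteLattice L] [MulAction T L] (𝔥 : H →* T)
    (hmono : ∀ (t : T) (s₁ s₂ : L), s₁ ≤ s₂ → t • s₁ ≤ t • s₂)
    (f : X → L) :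
    IsLowerSemihomog 𝔥 (lowE {φ | IsHomog 𝔥 φ} f) ∧
    IsLowerSemihomog 𝔥 (lowE {φ | IsLowerSemihomog 𝔥 φ} f) ∧
    IsUpperSemihomog 𝔥 (uppE {φ | IsHomog 𝔥 φ} f) ∧
    IsUpperSemihomog 𝔥 (uppE {φ | IsUpperSemihomog 𝔥 φ} f) :=
  ⟨isLowerSemihomog_lowE hmono fun _ => IsHomog.isLowerSemihomog,
    isLowerSemihomog_lowE hmono fun _ => id,
    isUpperSemihomog_uppE hmono fun _ => IsHomog.isUpperSemihomog,
    isUpperSemihomog_uppE hmono fun _ => id⟩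
end

section
/- Suppose T is a group and let Φ be the class of all 𝔥-homogeneous functions X → L. Then for every f : X → L, both the lower Φ-envelope lE_Φ f and the upper Φ-envelope uE_Φ f are 𝔥-homogeneous. (Corollary 1, group part.) -/
section MonotoneAction

variable {T L : Type*} [Group T] [CompleteLattice L] [MulAction T L]

def smulOrderIso (hmono : ∀ (t : T) (s₁ s₂ : L), s₁ ≤ s₂ → t • s₁ ≤ t • s₂) (t : T) : L ≃o L :=
  (MulAction.toPerm t).toOrderIso (hmono t · · ·) (hmono t⁻¹ · · ·)

theorem smul_iSup_of_monotone (hmono : ∀ (t : T) (s₁ s₂ : L), s₁ ≤ s₂ → t • s₁ ≤ t • s₂)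
    {ι : Sort*} (t : T) (g : ι → L) : t • ⨆ i, g i = ⨆ i, t • g i :=
  (smulOrderIso hmono t).map_iSup g

theorem smul_iInf_of_monotone (hmono : ∀ (t : T) (s₁ s₂ : L), s₁ ≤ s₂ → t • s₁ ≤ t • s₂)
    {ι : Sort*} (t : T) (g : ι → L) : t • ⨅ i, g i = ⨅ i, t • g i :=
  (smulOrderIso hmono t).map_iInf g

end MonotoneAction

section Envelopes

variable {H T X L : Type*} [Monoid H] [Group T] [MulAction H X] [CompleteLattice L]
  [MulAction T L] {𝔥 : H →* T}

theorem IsHomog.iSup (hmono : ∀ (t : T) (s₁ s₂ : L), s₁ ≤ s₂ → t • s₁ ≤ t • s₂)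
    {ι : Sort*} {φ : ι → X → L} (hφ : ∀ i, IsHomog 𝔥 (φ i)) :
    IsHomog 𝔥 (fun x => ⨆ i, φ i x) := by
  intro h x
  simp only [hφ _ h x, smul_iSup_of_monotone hmono]

theorem IsHomog.iInf (hmono : ∀ (t : T) (s₁ s₂ : L), s₁ ≤ s₂ → t • s₁ ≤ t • s₂)
    {ι : Sort*} {φ : ι → X → L} (hφ : ∀ i, IsHomog 𝔥 (φ i)) :
    IsHomog 𝔥 (fun x => ⨅ i, φ i x) := by
  intro h x
  simp only [hφ _ h x, smul_iInf_of_monotone hmono]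

theorem isHomog_lowE (hmono : ∀ (t : T) (s₁ s₂ : L), s₁ ≤ s₂ → t • s₁ ≤ t • s₂)
    {Φ : Set (X → L)} (hΦ : ∀ φ ∈ Φ, IsHomog 𝔥 φ) (f : X → L) : IsHomog 𝔥 (lowE Φ f) := by
  rw [show lowE Φ f = fun x => ⨆ ψ : {φ ∈ Φ | φ ≤ f}, ψ.1 x from funext fun _ => iSup_subtype']
  exact IsHomog.iSup hmono fun ψ => hΦ _ ψ.2.1

theorem isHomog_uppE (hmono : ∀ (t : T) (s₁ s₂ : L), s₁ ≤ s₂ → t • s₁ ≤ t • s₂)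
    {Φ : Set (X → L)} (hΦ : ∀ φ ∈ Φ, IsHomog 𝔥 φ) (f : X → L) : IsHomog 𝔥 (uppE Φ f) := by
  rw [show uppE Φ f = fun x => ⨅ ψ : {φ ∈ Φ | f ≤ φ}, ψ.1 x from funext fun _ => iInf_subtype']
  exact IsHomog.iInf hmono fun ψ => hΦ _ ψ.2.1

end Envelopes

/-- **Corollary 1, group part.** If `T` is a group and `Φ` is the class of all
`𝔥`-homogeneous functions, then both envelopes `lE_Φ f` and `uE_Φ f` are
`𝔥`-homogeneous. -/
theorem cor1_group {H T X L : Type*} [Monoid H] [Group T] [MulAction H X]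
    [CompleteLattice L] [MulAction T L] (𝔥 : H →* T)
    (hmono : ∀ (t : T) (s₁ s₂ : L), s₁ ≤ s₂ → t • s₁ ≤ t • s₂)
    (f : X → L) :
    IsHomog 𝔥 (lowE {φ | IsHomog 𝔥 φ} f) ∧ IsHomog 𝔥 (uppE {φ | IsHomog 𝔥 φ} f) :=
  ⟨isHomog_lowE hmono (fun _ => id) f, isHomog_uppE hmono (fun _ => id) f⟩
end
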